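/- arXiv:1811.01537 — 2 statements merged into one kernel-verified Lean document; each statement's English description precedes it below -/
import Mathlib

section
/- For a permutation σ and a top-list π on [n], the generalized distances satisfy K(σ,π) ≤ F(σ,π) ≤ 2·K(σ,π). -/
/-!
On pairs ordered by `σ`, the linear extension `τ` orders them exactly as `π` does (tied unranked
candidates follow `σ`), so `K(σ, π)` is the Kendall distance `K(σ, τ)` between two permutations,
and the claim becomes the Diaconis–Graham inequality `K ≤ F ≤ 2 K`. Counting the `j` below `i`
in `σ` and in `τ` gives `σ i - τ i = a i - b i`, where `a i` and `b i` count the discordant pairs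
in which `i` is the upper, resp. lower, element for `σ`; summing `|a i - b i| ≤ a i + b i` gives
`F ≤ 2 K`. For `K ≤ F`, discordant pairs are charged injectively to unit steps of the
displacements `|σ k - τ k|`.
-/

open Finset

/-- A top-`k`-list on `[n]`. -/
def IsTopList (n k : ℕ) (π : Fin n → ℕ∞) : Prop :=
  (∀ i, π i ≠ ⊤ → 1 ≤ π i ∧ π i ≤ (k : ℕ∞)) ∧
  (∀ r : ℕ, 1 ≤ r → r ≤ k → ∃! i, π i = (r : ℕ∞))

/-- The 1-indexed rank of candidate `i` in the permutation `σ`. -/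
def rank1 {n : ℕ} (σ : Equiv.Perm (Fin n)) (i : Fin n) : ℕ := (σ i : ℕ) + 1

/-- `τ` is the linear extension of the top-list `π` breaking ties by `σ`. -/
def IsLinExt {n : ℕ} (π : Fin n → ℕ∞) (σ τ : Equiv.Perm (Fin n)) : Prop :=
  (∀ i, π i ≠ ⊤ → ((rank1 τ i : ℕ) : ℕ∞) = π i) ∧
  (∀ i j, π i ≠ ⊤ → π j = ⊤ → τ i < τ j) ∧
  (∀ i j, π i = ⊤ → π j = ⊤ → (σ i < σ j ↔ τ i < τ j))

/-- Generalized Kendall tau distance between a permutation and a top-list. -/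
def kendallGen {n : ℕ} (σ : Equiv.Perm (Fin n)) (π : Fin n → ℕ∞) : ℕ :=
  (Finset.univ.filter (fun q : Fin n × Fin n => σ q.2 < σ q.1 ∧ π q.1 < π q.2)).card

/-- Spearman footrule distance between two permutations. -/
def footrule {n : ℕ} (σ τ : Equiv.Perm (Fin n)) : ℤ :=
  ∑ i, |((σ i : ℕ) : ℤ) - ((τ i : ℕ) : ℤ)|

section Kendall

open Equiv

variable {n : ℕ}

def kendall (σ τ : Perm (Fin n)) : ℕ :=
  #{q : Fin n × Fin n | σ q.2 < σ q.1 ∧ τ q.1 < τ q.2}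

theorem kendall_comm (σ τ : Perm (Fin n)) : kendall σ τ = kendall τ σ :=
  card_nbij' Prod.swap Prod.swap (fun q hq => by simpa [and_comm] using hq)
    (fun q hq => by simpa [and_comm] using hq) (fun _ _ => rfl) (fun _ _ => rfl)

theorem kendall_eq_sum (σ τ : Perm (Fin n)) :
    kendall σ τ = ∑ i, #{j | σ j < σ i ∧ τ i < τ j} := by
  simp only [kendall, card_filter, Fintype.sum_prod_type]

theorem card_filter_apply_lt (σ : Perm (Fin n)) (i : Fin n) : #{j | σ j < σ i} = σ i := by
  rw [← Fin.card_Iio]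
  exact card_equiv σ (by simp)

theorem card_lt_lt_add_card_lt_lt (σ τ : Perm (Fin n)) (i : Fin n) :
    #{j | σ j < σ i ∧ τ j < τ i} + #{j | σ j < σ i ∧ τ i < τ j} = σ i := by
  have hsplit := card_filter_add_card_filter_not (s := {j | σ j < σ i}) (fun j => τ j < τ i)
  rw [card_filter_apply_lt, filter_filter, filter_filter] at hsplit
  rw [← hsplit]
  congr 1
  refine congrArg card (filter_congr fun j _ => ?_)
  refine and_congr_right fun hj => ?_
  have hji : τ j ≠ τ i := τ.injective.ne (σ.injective.ne_iff.1 hj.ne)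
  exact ⟨not_lt_of_gt, fun h => lt_of_le_of_ne (not_lt.1 h) hji.symm⟩

theorem apply_sub_apply_eq_card_sub_card (σ τ : Perm (Fin n)) (i : Fin n) :
    ((σ i : ℕ) : ℤ) - (τ i : ℕ) =
      #{j | σ j < σ i ∧ τ i < τ j} - #{j | τ j < τ i ∧ σ i < σ j} := by
  have hσ := card_lt_lt_add_card_lt_lt σ τ i
  have hτ := card_lt_lt_add_card_lt_lt τ σ i
  have hcomm : #{j | τ j < τ i ∧ σ j < σ i} = #{j | σ j < σ i ∧ τ j < τ i} :=
    congrArg card (filter_congr fun _ _ => and_comm)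
  omega

theorem footrule_le_two_mul_kendall (σ τ : Perm (Fin n)) :
    footrule σ τ ≤ 2 * (kendall σ τ : ℤ) := by
  calc footrule σ τ
      ≤ ∑ i, ((#{j | σ j < σ i ∧ τ i < τ j} : ℤ) + #{j | τ j < τ i ∧ σ i < σ j}) := by
        refine sum_le_sum fun i _ => ?_
        rw [apply_sub_apply_eq_card_sub_card]
        exact abs_le.2 ⟨by omega, by omega⟩
    _ = kendall σ τ + kendall τ σ := by
        rw [sum_add_distrib, kendall_eq_sum, kendall_eq_sum]; push_cast; rfl
    _ = 2 * (kendall σ τ : ℤ) := by rw [← kendall_comm]; ring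

theorem kendall_le_footrule (σ τ : Perm (Fin n)) : (kendall σ τ : ℤ) ≤ footrule σ τ := by
  set T : Finset (Σ _ : Fin n, ℤ) :=
    univ.sigma fun k => Ioc (min (σ k : ℤ) (τ k)) (max (σ k : ℤ) (τ k))
  have hT : (#T : ℤ) = footrule σ τ := by
    simp only [T, card_sigma, Int.card_Ioc, max_sub_min_eq_abs, Nat.cast_sum,
      Int.toNat_of_nonneg (abs_nonneg _), footrule, abs_sub_comm]
  rw [← hT, Nat.cast_le]
  -- a discordant pair `(i, j)` is charged to the step `τ j ∈ (τ i, σ i]` of `i` when `τ j ≤ σ i`,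
  -- and otherwise to the step `σ i ∈ (σ j, τ j]` of `j`
  let f : Fin n × Fin n → Σ _ : Fin n, ℤ := fun q =>
    if τ q.2 ≤ σ q.1 then ⟨q.1, τ q.2⟩ else ⟨q.2, σ q.1⟩
  refine card_le_card_of_injOn f ?_ ?_
  · rintro ⟨i, j⟩ hij
    simp only [coe_filter, mem_univ, true_and, Set.mem_ofPred_eq, Fin.lt_def] at hij
    by_cases h : τ j ≤ σ i <;>
      simp only [f, T, h, ↓reduceIte, coe_sigma, coe_univ, coe_Ioc, Set.mem_sigma_iff,
        Set.mem_univ, Set.mem_Ioc, true_and] <;>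
      omega
  · rintro ⟨i, j⟩ hij ⟨i', j'⟩ hij' heq
    simp only [coe_filter, mem_univ, true_and, Set.mem_ofPred_eq, Fin.lt_def] at hij hij'
    by_cases h : τ j ≤ σ i <;> by_cases h' : τ j' ≤ σ i' <;>
      simp only [f, h, h', ↓reduceIte, Sigma.mk.injEq, heq_eq_eq, Nat.cast_inj] at heq <;>
      obtain ⟨rfl, hval⟩ := heq <;>
      simp only [Fin.le_def, not_le] at h h'
    · rw [τ.injective (Fin.ext hval)]
    · omega
    · omega
    · rw [σ.injective (Fin.ext hval)]

theorem IsLinExt.lt_iff {π : Fin n → ℕ∞} {σ τ : Perm (Fin n)} (hτ : IsLinExt π σ τ)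
    {i j : Fin n} (hσ : σ j < σ i) : π i < π j ↔ τ i < τ j := by
  obtain ⟨hrank, htop, hties⟩ := hτ
  by_cases hi : π i = ⊤ <;> by_cases hj : π j = ⊤
  · simp only [hi, hj, lt_self_iff_false, false_iff]
    exact fun h => hσ.asymm ((hties i j hi hj).2 h)
  · simp only [hi, not_top_lt, false_iff, not_lt]
    exact (htop j i hj hi).le
  · simp only [hj, lt_top_iff_ne_top, hi, ne_eq, not_false_eq_true, true_iff]
    exact htop i j hi hj
  · rw [← hrank i hi, ← hrank j hj, Nat.cast_lt, rank1, rank1, Fin.lt_def]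
    omega

theorem kendallGen_eq_kendall {π : Fin n → ℕ∞} {σ τ : Perm (Fin n)} (hτ : IsLinExt π σ τ) :
    kendallGen σ π = kendall σ τ :=
  congrArg card (filter_congr fun _ _ => and_congr_right hτ.lt_iff)

end Kendall

theorem kendallGen_le_footrule_le_two_kendallGen_general {n : ℕ} (π : Fin n → ℕ∞)
    (σ τ : Equiv.Perm (Fin n)) (hτ : IsLinExt π σ τ) :
    (kendallGen σ π : ℤ) ≤ footrule σ τ ∧
      footrule σ τ ≤ 2 * (kendallGen σ π : ℤ) := by
  rw [kendallGen_eq_kendall hτ]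
  exact ⟨kendall_le_footrule σ τ, footrule_le_two_mul_kendall σ τ⟩

/-- For a permutation `σ` and a top-list `π`, the generalized distances satisfy
`K(σ,π) ≤ F(σ,π) ≤ 2·K(σ,π)`, where `F(σ,π) = F(σ,τ)` with `τ` the linear
extension of `π` breaking ties by `σ`. -/
theorem kendallGen_le_footrule_le_two_kendallGen {n k : ℕ} (π : Fin n → ℕ∞)
    (hπ : IsTopList n k π) (σ τ : Equiv.Perm (Fin n)) (hτ : IsLinExt π σ τ) :
    (kendallGen σ π : ℤ) ≤ footrule σ τ ∧
      footrule σ τ ≤ 2 * (kendallGen σ π : ℤ) :=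
  kendallGen_le_footrule_le_two_kendallGen_general π σ τ hτ
end

section
/- Let p be a distribution over top-k-lists on [n] (each ranked top-list ranks exactly k candidates). For any permutation σ* of [n], K(σ*,p) ≥ Σ_{i : σ*(i) > k} (σ*(i) − k)·Score(i). -/
open Finset

/-- Score of candidate `i`. -/
def score {n m : ℕ} (w : Fin m → ℝ) (π : Fin m → Fin n → ℕ∞) (i : Fin n) : ℝ :=
  ∑ v, if π v i ≠ ⊤ then w v else 0

/-
A top-`k`-list `π` ranks at most `k` candidates. If `π` ranks `i`, then among the `σ i + 1`
candidates `j` with `σ j ≤ σ i`, every `j` that `π` does not place strictly after `i` is itself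
ranked, so at most `k` of them escape being an inversion `(i, j)`. Hence `π` contributes at least
`σ i + 1 - k` inversions per ranked candidate `i`; averaging over voters with weights `w` turns
"ranked by `π`" into `score w π i`.
-/

namespace IsTopList

variable {n k : ℕ} {π : Fin n → ℕ∞}

theorem toNat_mem_Icc (h : IsTopList n k π) {i : Fin n} (hi : π i ≠ ⊤) :
    (π i).toNat ∈ Icc 1 k := by
  obtain ⟨h1, hk⟩ := h.1 i hi
  rw [← ENat.natCast_toNat hi] at h1 hk
  exact mem_Icc.2 ⟨by exact_mod_cast h1, by exact_mod_cast hk⟩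

theorem injOn_toNat_ranked (h : IsTopList n k π) :
    Set.InjOn (fun i => (π i).toNat) {i | π i ≠ ⊤} := by
  intro i hi j hj hij
  obtain ⟨r1, rk⟩ := mem_Icc.1 (h.toNat_mem_Icc hi)
  obtain ⟨u, -, huniq⟩ := h.2 _ r1 rk
  have hj' : π j = (π i).toNat := by
    simp only at hij
    rw [hij, ENat.natCast_toNat hj]
  rw [huniq i (ENat.natCast_toNat hi).symm, huniq j hj']

theorem card_ranked_le (h : IsTopList n k π) : #{i | π i ≠ ⊤} ≤ k := by
  simpa using card_le_card_of_injOn (fun i => (π i).toNat)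
    (fun i hi => h.toNat_mem_Icc (mem_filter.1 hi).2)
    (fun i hi j hj => h.injOn_toNat_ranked (mem_filter.1 hi).2 (mem_filter.1 hj).2)

end IsTopList

section Inversions

variable {n : ℕ} (σ : Equiv.Perm (Fin n)) (π : Fin n → ℕ∞)

theorem kendallGen_eq_sum_card :
    kendallGen σ π = ∑ i, #{j | σ j < σ i ∧ π i < π j} := by
  rw [kendallGen, card_filter, ← univ_product_univ, sum_product]
  exact sum_congr rfl fun i _ => (card_filter _ _).symm

theorem card_Iic_le_card_inversions_add_card_ranked {i : Fin n} (hi : π i ≠ ⊤) :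
    (σ i : ℕ) + 1 ≤ #{j | σ j < σ i ∧ π i < π j} + #{j | π j ≠ ⊤} := by
  have hIic : #{j | σ j ≤ σ i} = (σ i : ℕ) + 1 := by
    rw [← Fin.card_Iic, ← card_map σ.toEmbedding]
    congr 1
    ext j
    simp
  have hcover : ({j | σ j ≤ σ i} : Finset _) ⊆
      ({j | σ j < σ i ∧ π i < π j} : Finset _) ∪ ({j | π j ≠ ⊤} : Finset _) := by
    intro j
    simp only [mem_union, mem_filter_univ]
    intro hj
    by_cases hij : π i < π j
    · exact Or.inl ⟨lt_of_le_of_ne hj fun he => hij.ne (by rw [σ.injective he]), hij⟩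
    · exact Or.inr fun htop => hi (top_le_iff.1 (htop ▸ not_lt.1 hij : ⊤ ≤ π i))
  exact hIic ▸ (card_le_card hcover).trans (card_union_le _ _)

theorem sum_ranked_penalty_le_kendallGen {k : ℕ} (h : IsTopList n k π) (s : Finset (Fin n)) :
    ∑ i ∈ s, (if π i ≠ ⊤ then ((σ i : ℕ) + 1 - k : ℝ) else 0) ≤ kendallGen σ π := by
  rw [kendallGen_eq_sum_card, Nat.cast_sum]
  calc ∑ i ∈ s, (if π i ≠ ⊤ then ((σ i : ℕ) + 1 - k : ℝ) else 0)
      ≤ ∑ i ∈ s, (#{j | σ j < σ i ∧ π i < π j} : ℝ) := by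
        refine sum_le_sum fun i _ => ?_
        split_ifs with hi
        · have := (card_Iic_le_card_inversions_add_card_ranked σ π hi).trans
            (Nat.add_le_add_left h.card_ranked_le _)
          rw [sub_le_iff_le_add]
          exact_mod_cast this
        · positivity
    _ ≤ ∑ i, (#{j | σ j < σ i ∧ π i < π j} : ℝ) :=
        sum_le_sum_of_subset_of_nonneg (subset_univ s) fun _ _ _ => by positivity

end Inversions

theorem topk_cost_lower_bound_general {n m k : ℕ}
    (w : Fin m → ℝ) (hw : ∀ v, 0 ≤ w v)
    (π : Fin m → Fin n → ℕ∞) (hπ : ∀ v, IsTopList n k (π v))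
    (σstar : Equiv.Perm (Fin n)) :
    ∑ i ∈ Finset.univ.filter (fun i => k < (σstar i : ℕ) + 1),
        ((((σstar i : ℕ) : ℝ) + 1) - (k : ℝ)) * score w π i ≤
      ∑ v, w v * (kendallGen σstar (π v) : ℝ) := by
  have hswap : ∑ i ∈ univ.filter (fun i => k < (σstar i : ℕ) + 1),
      ((((σstar i : ℕ) : ℝ) + 1) - (k : ℝ)) * score w π i =
      ∑ v, w v * ∑ i ∈ univ.filter (fun i => k < (σstar i : ℕ) + 1),
        (if π v i ≠ ⊤ then ((σstar i : ℕ) + 1 - k : ℝ) else 0) := by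
    simp only [score, mul_sum]
    rw [sum_comm]
    refine sum_congr rfl fun v _ => sum_congr rfl fun i _ => ?_
    split_ifs <;> ring
  rw [hswap]
  exact sum_le_sum fun v _ =>
    mul_le_mul_of_nonneg_left (sum_ranked_penalty_le_kendallGen σstar (π v) (hπ v) _) (hw v)

/-- Lower bound for top-`k`-list aggregation: for every permutation `σ*`,
`K(σ*,p) ≥ Σ_{i : σ*(i) > k} (σ*(i) − k)·Score(i)` (ranks are 1-indexed). -/
theorem topk_cost_lower_bound {n m k : ℕ}
    (w : Fin m → ℝ) (hw : ∀ v, 0 ≤ w v) (hw1 : ∑ v, w v = 1)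
    (π : Fin m → Fin n → ℕ∞) (hπ : ∀ v, IsTopList n k (π v))
    (σstar : Equiv.Perm (Fin n)) :
    ∑ i ∈ Finset.univ.filter (fun i => k < (σstar i : ℕ) + 1),
        ((((σstar i : ℕ) : ℝ) + 1) - (k : ℝ)) * score w π i ≤
      ∑ v, w v * (kendallGen σstar (π v) : ℝ) :=
  topk_cost_lower_bound_general w hw π hπ σstar
end
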